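/- arXiv:1808.08085 — 5 statements merged into one kernel-verified Lean document; each statement's English description precedes it below -/
import Mathlib

section
/- Let a, b, c > 0 and δ₁, δ₂ > 0 be constants, and consider the scalar differential equation v̇(t) = -a·v(t)² + b·v(t)·e^{-δ₁ t} + c·e^{-δ₂ t} with initial condition v(t₀) = v₀, where t₀ ≥ 0 and v₀ ≥ 0. Then every maximal solution is defined on all of [t₀, ∞), is bounded on [t₀, ∞), and satisfies lim_{t→∞} v(t) = 0. -/
/-!
For `t ≥ 0` the field is positive at `0` and negative above `1 + (b + c) / a`, so by the fencing
theorem solutions starting in `[0, B]` (with `B` beyond that threshold) stay there. Truncating the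
field outside `[0, B]` therefore gives a bounded, globally Lipschitz equation whose global
Picard–Lindelöf solution solves the original one; uniqueness identifies it with any solution
given on `[t₀, T)`. Once `b e^{-δ₁ t} ≤ a ε / 2` and `c e^{-δ₂ t} ≤ a ε² / 4`, solutions stay below
the supersolution `ε + C e^{-a ε (t - T) / 4}`, so `limsup v ≤ ε` for every `ε > 0`.
-/

open Set Filter Real Topology Metric
open scoped NNReal

section GlobalExistence

variable {E : Type*} [NormedAddCommGroup E] [NormedSpace ℝ E] [CompleteSpace E]
  {f : ℝ → E → E} {K C : ℝ≥0}

theorem exists_forall_mem_ball_hasDerivAt_of_lipschitzWith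
    (hlip : ∀ t, LipschitzWith K (f t)) (hcont : ∀ x, Continuous (f · x))
    (hbound : ∀ t x, ‖f t x‖ ≤ C) (t₀ : ℝ) (x₀ : E) (n : ℕ) :
    ∃ g : ℝ → E, g t₀ = x₀ ∧ ∀ t ∈ ball t₀ n, HasDerivAt g (f t (g t)) t := by
  have hpl : IsPicardLindelof f (tmin := t₀ - n) (tmax := t₀ + n)
      ⟨t₀, by constructor <;> linarith [n.cast_nonneg (α := ℝ)]⟩ x₀ (C * n) 0 C K :=
    { lipschitzOnWith := fun t _ => (hlip t).lipschitzOnWith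
      continuousOn := fun x _ => (hcont x).continuousOn
      norm_le := fun t _ x _ => hbound t x
      mul_max_le := by simp }
  obtain ⟨g, hg₀, hg⟩ := hpl.exists_eq_forall_mem_Icc_hasDerivWithinAt₀
  refine ⟨g, hg₀, fun t ht => ?_⟩
  rw [Real.ball_eq_Ioo] at ht
  exact (hg t (Ioo_subset_Icc_self ht)).hasDerivAt (Icc_mem_nhds ht.1 ht.2)

theorem exists_forall_hasDerivAt_of_lipschitzWith
    (hlip : ∀ t, LipschitzWith K (f t)) (hcont : ∀ x, Continuous (f · x))
    (hbound : ∀ t x, ‖f t x‖ ≤ C) (t₀ : ℝ) (x₀ : E) :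
    ∃ g : ℝ → E, g t₀ = x₀ ∧ ∀ t, HasDerivAt g (f t (g t)) t := by
  choose sol hsol₀ hsol using
    exists_forall_mem_ball_hasDerivAt_of_lipschitzWith hlip hcont hbound t₀ x₀
  have hagree : ∀ m n : ℕ, ∀ t ∈ ball t₀ m, t ∈ ball t₀ n → sol m t = sol n t := by
    intro m n t hm hn
    have hmin : t ∈ ball t₀ (min m n : ℕ) := by
      rcases min_choice m n with h | h <;> rw [h] <;> assumption
    have hsub : ball t₀ (min m n : ℕ) ⊆ ball t₀ m ∩ ball t₀ n := by
      apply subset_inter <;> apply ball_subset_ball <;> exact_mod_cast (by omega)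
    rw [Real.ball_eq_Ioo] at hmin hsub
    refine ODE_solution_unique_of_mem_Ioo (s := fun _ => univ)
      (fun t _ => (hlip t).lipschitzOnWith) ?_ (fun t ht => ⟨hsol m t (hsub ht).1, trivial⟩)
      (fun t ht => ⟨hsol n t (hsub ht).2, trivial⟩) ((hsol₀ m).trans (hsol₀ n).symm) hmin
    exact ⟨by linarith [hmin.1, hmin.2], by linarith [hmin.1, hmin.2]⟩
  set N : ℝ → ℕ := fun t => ⌈dist t t₀⌉₊ + 1
  have hN : ∀ t, t ∈ ball t₀ (N t) := fun t => by
    rw [mem_ball]; push_cast [N]; linarith [Nat.le_ceil (dist t t₀)]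
  refine ⟨fun t => sol (N t) t, hsol₀ _, fun t => ?_⟩
  have hloc : (fun t' => sol (N t') t') =ᶠ[𝓝 t] sol (N t) := by
    filter_upwards [isOpen_ball.mem_nhds (hN t)] with t' ht' using hagree _ _ t' (hN t') ht'
  exact (hsol (N t) t (hN t)).congr_of_eventuallyEq hloc

end GlobalExistence

theorem mapsTo_Icc_of_hasDerivAt_of_inward {f : ℝ → ℝ → ℝ} {v : ℝ → ℝ} {τ p lo hi : ℝ}
    (hv : ∀ t ∈ Icc τ p, HasDerivAt v (f t (v t)) t)
    (hlo : ∀ t ∈ Ico τ p, 0 < f t lo) (hhi : ∀ t ∈ Ico τ p, f t hi < 0)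
    (h₀ : v τ ∈ Icc lo hi) : MapsTo v (Icc τ p) (Icc lo hi) := by
  have hcont : ContinuousOn v (Icc τ p) := fun t ht => (hv t ht).continuousAt.continuousWithinAt
  have hv' : ∀ t ∈ Ico τ p, HasDerivWithinAt v (f t (v t)) (Ici t) t :=
    fun t ht => (hv t (Ico_subset_Icc_self ht)).hasDerivWithinAt
  intro t ht
  constructor
  · have := image_le_of_deriv_right_lt_deriv_boundary (f := fun t => -v t) hcont.neg
      (fun s hs => (hv' s hs).neg) (B := fun _ => -lo) (B' := 0) (neg_le_neg h₀.1)
      (fun _ => hasDerivAt_const _ _) (fun s hs hvs => by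
        simpa [neg_inj.mp hvs] using hlo s hs) ht
    simpa using this
  · exact image_le_of_deriv_right_lt_deriv_boundary hcont hv' (B := fun _ => hi) (B' := 0) h₀.2
      (fun _ => hasDerivAt_const _ _) (fun s hs hvs => by simpa [hvs] using hhi s hs) ht

theorem exp_neg_mul_le_one {δ t : ℝ} (hδ : 0 ≤ δ) (ht : 0 ≤ t) : Real.exp (-δ * t) ≤ 1 :=
  Real.exp_le_one_iff.2 (by nlinarith)

section ComparisonField

variable {a b c δ₁ δ₂ : ℝ}

noncomputable def comparisonField (a b c δ₁ δ₂ t x : ℝ) : ℝ :=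
  -a * x ^ 2 + b * x * Real.exp (-δ₁ * t) + c * Real.exp (-δ₂ * t)

theorem comparisonField_zero_pos (hc : 0 < c) (t : ℝ) : 0 < comparisonField a b c δ₁ δ₂ t 0 := by
  simpa [comparisonField] using mul_pos hc (Real.exp_pos _)

theorem comparisonField_neg (ha : 0 < a) (hb : 0 ≤ b) (hc : 0 ≤ c) (hδ₁ : 0 ≤ δ₁)
    (hδ₂ : 0 ≤ δ₂) {t x : ℝ} (ht : 0 ≤ t) (hx : 1 + (b + c) / a ≤ x) :
    comparisonField a b c δ₁ δ₂ t x < 0 := by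
  have hax : a + b + c ≤ a * x := by
    have := mul_le_mul_of_nonneg_left hx ha.le
    rwa [mul_add, mul_div_cancel₀ _ ha.ne', mul_one, ← add_assoc] at this
  have hx₁ : 1 ≤ x := le_trans (le_add_of_nonneg_right (by positivity)) hx
  have h₁ := exp_neg_mul_le_one hδ₁ ht
  have h₂ := exp_neg_mul_le_one hδ₂ ht
  simp only [comparisonField]
  nlinarith [mul_le_mul_of_nonneg_left h₁ (mul_nonneg hb (by linarith : (0:ℝ) ≤ x)),
    mul_le_mul_of_nonneg_left h₂ hc]

theorem abs_comparisonField_le (ha : 0 ≤ a) (hb : 0 ≤ b) (hc : 0 ≤ c) (hδ₁ : 0 ≤ δ₁)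
    (hδ₂ : 0 ≤ δ₂) {t x B : ℝ} (ht : 0 ≤ t) (hx : x ∈ Icc 0 B) :
    |comparisonField a b c δ₁ δ₂ t x| ≤ a * B ^ 2 + b * B + c := by
  obtain ⟨hx₀, hxB⟩ := hx
  have h₁ := exp_neg_mul_le_one hδ₁ ht
  have h₂ := exp_neg_mul_le_one hδ₂ ht
  have h₁' := (Real.exp_pos (-δ₁ * t)).le
  have h₂' := (Real.exp_pos (-δ₂ * t)).le
  simp only [comparisonField]
  rw [abs_le]
  constructor
  · nlinarith [mul_nonneg (mul_nonneg hb hx₀) h₁', mul_nonneg hc h₂',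
      mul_le_mul hxB hxB hx₀ (hx₀.trans hxB)]
  · nlinarith [mul_le_mul_of_nonneg_left h₁ (mul_nonneg hb hx₀),
      mul_le_mul_of_nonneg_left h₂ hc, mul_nonneg ha (sq_nonneg x)]

theorem lipschitzOnWith_comparisonField (ha : 0 ≤ a) (hb : 0 ≤ b) (hδ₁ : 0 ≤ δ₁) {t : ℝ}
    (ht : 0 ≤ t) (B : ℝ) :
    LipschitzOnWith (2 * a * B + b).toNNReal (comparisonField a b c δ₁ δ₂ t) (Icc 0 B) := by
  refine LipschitzOnWith.of_dist_le_mul fun x hx y hy => ?_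
  have h₁ := exp_neg_mul_le_one hδ₁ ht
  have h₁' := (Real.exp_pos (-δ₁ * t)).le
  have hfactor : comparisonField a b c δ₁ δ₂ t x - comparisonField a b c δ₁ δ₂ t y
      = (b * Real.exp (-δ₁ * t) - a * (x + y)) * (x - y) := by
    simp only [comparisonField]; ring
  have hslope : |b * Real.exp (-δ₁ * t) - a * (x + y)| ≤ 2 * a * B + b := by
    rw [abs_le]
    constructor <;> nlinarith [hx.1, hx.2, hy.1, hy.2, mul_nonneg hb h₁']
  rw [Real.dist_eq, Real.dist_eq, hfactor, abs_mul,
    Real.coe_toNNReal _ (by nlinarith [hx.1, hx.2])]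
  exact mul_le_mul_of_nonneg_right hslope (abs_nonneg _)

theorem comparisonField_le_neg_mul (ha : 0 ≤ a) {ε t x : ℝ} (hε : 0 ≤ ε)
    (h₁ : b * Real.exp (-δ₁ * t) ≤ a * ε / 2) (h₂ : c * Real.exp (-δ₂ * t) ≤ a * ε ^ 2 / 4)
    (hx : ε ≤ x) : comparisonField a b c δ₁ δ₂ t x ≤ -(a * ε / 4) * x := by
  simp only [comparisonField]
  nlinarith [mul_le_mul_of_nonneg_left h₁ (hε.trans hx),
    mul_le_mul_of_nonneg_left hx (mul_nonneg ha hε),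
    mul_le_mul_of_nonneg_left hx (mul_nonneg ha (hε.trans hx))]

theorem mapsTo_Icc_of_hasDerivAt_comparisonField (ha : 0 < a) (hb : 0 ≤ b) (hc : 0 < c)
    (hδ₁ : 0 ≤ δ₁) (hδ₂ : 0 ≤ δ₂) {v : ℝ → ℝ} {τ p B : ℝ} (hτ : 0 ≤ τ)
    (hB : 1 + (b + c) / a ≤ B)
    (hv : ∀ t ∈ Icc τ p, HasDerivAt v (comparisonField a b c δ₁ δ₂ t (v t)) t)
    (h₀ : v τ ∈ Icc 0 B) : MapsTo v (Icc τ p) (Icc 0 B) :=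
  mapsTo_Icc_of_hasDerivAt_of_inward hv (fun t _ => comparisonField_zero_pos hc t)
    (fun _ ht => comparisonField_neg ha hb hc.le hδ₁ hδ₂ (hτ.trans ht.1) hB) h₀

theorem exists_forall_ge_hasDerivAt_comparisonField (ha : 0 < a) (hb : 0 ≤ b) (hc : 0 < c)
    (hδ₁ : 0 ≤ δ₁) (hδ₂ : 0 ≤ δ₂) {τ x₀ B : ℝ} (hτ : 0 ≤ τ) (hB : 1 + (b + c) / a ≤ B)
    (hx₀ : x₀ ∈ Icc 0 B) :
    ∃ g : ℝ → ℝ, g τ = x₀ ∧ ∀ t ∈ Ici τ, HasDerivAt g (comparisonField a b c δ₁ δ₂ t (g t)) t := by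
  have hB₀ : 0 ≤ B := hx₀.1.trans hx₀.2
  -- bounded and globally Lipschitz, and equal to the original field along solutions in `[0, B]`
  set G : ℝ → ℝ → ℝ := fun t x => comparisonField a b c δ₁ δ₂ (max t 0) (projIcc 0 B hB₀ x)
  have hGlip (t : ℝ) : LipschitzWith ((2 * a * B + b).toNNReal * 1) (G t) :=
    (lipschitzOnWith_comparisonField ha.le hb hδ₁ (le_max_right t 0) B).to_restrict.comp
      (LipschitzWith.projIcc hB₀)
  have hGcont (x : ℝ) : Continuous (G · x) := by
    simp only [G, comparisonField]
    fun_prop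
  have hGbound (t x : ℝ) : ‖G t x‖ ≤ (a * B ^ 2 + b * B + c).toNNReal := by
    rw [Real.norm_eq_abs, Real.coe_toNNReal _ (by positivity)]
    exact abs_comparisonField_le ha.le hb hc.le hδ₁ hδ₂ (le_max_right t 0) (projIcc 0 B hB₀ x).2
  obtain ⟨g, hg₀, hg⟩ := exists_forall_hasDerivAt_of_lipschitzWith hGlip hGcont hGbound τ x₀
  have hgB (t : ℝ) (ht : t ∈ Ici τ) : g t ∈ Icc 0 B :=
    mapsTo_Icc_of_hasDerivAt_of_inward (fun s _ => hg s)
      (fun s _ => by simpa [G, projIcc_left] using comparisonField_zero_pos hc (max s 0))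
      (fun s _ => by simpa [G, projIcc_right] using
        comparisonField_neg ha hb hc.le hδ₁ hδ₂ (le_max_right s 0) hB)
      (hg₀ ▸ hx₀) ⟨ht, le_rfl⟩
  refine ⟨g, hg₀, fun t ht => ?_⟩
  have hGF : G t (g t) = comparisonField a b c δ₁ δ₂ t (g t) := by
    simp only [G, max_eq_left (hτ.trans ht), projIcc_of_mem hB₀ (hgB t ht)]
  exact hGF ▸ hg t

-- Above `ε` the field is at most `-(a ε / 4) x`, which makes the barrier a strict supersolution.
theorem le_add_mul_exp_of_hasDerivAt_comparisonField (ha : 0 < a) {v : ℝ → ℝ} {T ε t : ℝ}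
    (hε : 0 < ε) (hv : ∀ s ∈ Ici T, HasDerivAt v (comparisonField a b c δ₁ δ₂ s (v s)) s)
    (h₁ : ∀ s ∈ Ici T, b * Real.exp (-δ₁ * s) ≤ a * ε / 2)
    (h₂ : ∀ s ∈ Ici T, c * Real.exp (-δ₂ * s) ≤ a * ε ^ 2 / 4) (ht : T ≤ t) :
    v t ≤ ε + |v T| * Real.exp (-(a * ε / 4) * (t - T)) := by
  set k := a * ε / 4
  have hk : 0 < k * ε := by positivity
  have hbarrier (s : ℝ) : HasDerivAt (fun s => ε + |v T| * Real.exp (-k * (s - T)))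
      (-k * (|v T| * Real.exp (-k * (s - T)))) s := by
    refine ((((hasDerivAt_id' s).sub_const T).const_mul (-k)).exp.const_mul |v T|).const_add ε
      |>.congr_deriv ?_
    ring
  refine image_le_of_deriv_right_lt_deriv_boundary
    (fun s hs => (hv s hs.1).continuousAt.continuousWithinAt)
    (fun s hs => (hv s hs.1).hasDerivWithinAt)
    (by simpa using by linarith [le_abs_self (v T)]) hbarrier (fun s hs hvs => ?_) ⟨ht, le_rfl⟩
  have hεv : ε ≤ v s := by rw [hvs]; simp only [le_add_iff_nonneg_right]; positivity
  calc comparisonField a b c δ₁ δ₂ s (v s) ≤ -k * v s :=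
        comparisonField_le_neg_mul ha.le hε.le (h₁ s hs.1) (h₂ s hs.1) hεv
    _ < -k * (|v T| * Real.exp (-k * (s - T))) := by rw [hvs]; linarith

theorem tendsto_exp_neg_mul_sub_atTop {δ : ℝ} (hδ : 0 < δ) (T : ℝ) :
    Tendsto (fun t => Real.exp (-δ * (t - T))) atTop (𝓝 0) :=
  tendsto_exp_atBot.comp <|
    (tendsto_atTop_add_const_right atTop (-T) tendsto_id).const_mul_atTop_of_neg (neg_lt_zero.2 hδ)

theorem tendsto_zero_of_hasDerivAt_comparisonField (ha : 0 < a) (hδ₁ : 0 < δ₁) (hδ₂ : 0 < δ₂)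
    {v : ℝ → ℝ} {t₀ : ℝ}
    (hv : ∀ t ∈ Ici t₀, HasDerivAt v (comparisonField a b c δ₁ δ₂ t (v t)) t)
    (hv₀ : ∀ t ∈ Ici t₀, 0 ≤ v t) : Tendsto v atTop (𝓝 0) := by
  refine tendsto_order.2 ⟨fun m hm => ?_, fun ε hε => ?_⟩
  · filter_upwards [eventually_ge_atTop t₀] with t ht using hm.trans_le (hv₀ t ht)
  have hdecay {δ : ℝ} (hδ : 0 < δ) (C : ℝ) :
      Tendsto (fun t => C * Real.exp (-δ * t)) atTop (𝓝 0) := by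
    simpa using (tendsto_exp_neg_mul_sub_atTop hδ 0).const_mul C
  obtain ⟨T, hT⟩ := eventually_atTop.1 <| (eventually_ge_atTop t₀).and <|
    ((hdecay hδ₁ b).eventually (eventually_le_nhds (by positivity : 0 < a * (ε / 2) / 2))).and
    ((hdecay hδ₂ c).eventually (eventually_le_nhds (by positivity : 0 < a * (ε / 2) ^ 2 / 4)))
  have hbound (t : ℝ) (ht : T ≤ t) :=
    le_add_mul_exp_of_hasDerivAt_comparisonField ha (half_pos hε)
      (fun s hs => hv s (hT s hs).1) (fun s hs => (hT s hs).2.1) (fun s hs => (hT s hs).2.2) ht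
  have hlim := ((tendsto_exp_neg_mul_sub_atTop (by positivity : 0 < a * (ε / 2) / 4) T).const_mul
    |v T|).const_add (ε / 2)
  rw [mul_zero, add_zero] at hlim
  filter_upwards [hlim.eventually (eventually_lt_nhds (half_lt_self hε)),
    eventually_ge_atTop T] with t hlt hTt
  exact (hbound t hTt).trans_lt hlt

end ComparisonField

/-- **Lemma 1 (comparison lemma).**
For the scalar ODE `v̇ = -a v² + b v e^{-δ₁ t} + c e^{-δ₂ t}` with `a, b, c, δ₁, δ₂ > 0`,
initial time `t₀ ≥ 0` and initial value `v₀ ≥ 0`: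
every maximal solution is defined on all of `[t₀, ∞)` (i.e., any solution on a finite
interval `[t₀, T)` extends to a solution on `[t₀, ∞)`), and every solution defined on
`[t₀, ∞)` is bounded there and tends to `0` as `t → ∞`. -/
theorem comparison_lemma_global_bounded_tendsto_zero
    (a b c δ₁ δ₂ t₀ v₀ : ℝ)
    (ha : 0 < a) (hb : 0 < b) (hc : 0 < c) (hδ₁ : 0 < δ₁) (hδ₂ : 0 < δ₂)
    (ht₀ : 0 ≤ t₀) (hv₀ : 0 ≤ v₀) :
    -- prolongability to ∞: any solution on [t₀, T) extends to a solution on [t₀, ∞)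
    (∀ T : ℝ, t₀ < T → ∀ v : ℝ → ℝ, v t₀ = v₀ →
      (∀ t ∈ Set.Ico t₀ T,
        HasDerivAt v (-a * (v t) ^ 2 + b * (v t) * Real.exp (-δ₁ * t)
          + c * Real.exp (-δ₂ * t)) t) →
      ∃ w : ℝ → ℝ, w t₀ = v₀ ∧
        (∀ t ∈ Set.Ici t₀,
          HasDerivAt w (-a * (w t) ^ 2 + b * (w t) * Real.exp (-δ₁ * t)
            + c * Real.exp (-δ₂ * t)) t) ∧
        ∀ t ∈ Set.Ico t₀ T, w t = v t) ∧
    -- boundedness and convergence to zero of every solution on [t₀, ∞)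
    (∀ v : ℝ → ℝ, v t₀ = v₀ →
      (∀ t ∈ Set.Ici t₀,
        HasDerivAt v (-a * (v t) ^ 2 + b * (v t) * Real.exp (-δ₁ * t)
          + c * Real.exp (-δ₂ * t)) t) →
      (∃ M : ℝ, ∀ t ∈ Set.Ici t₀, |v t| ≤ M) ∧
      Filter.Tendsto v Filter.atTop (nhds 0)) := by
  set B := v₀ + (1 + (b + c) / a)
  have hB : 1 + (b + c) / a ≤ B := le_add_of_nonneg_left hv₀
  have hv₀B : v₀ ∈ Icc 0 B := ⟨hv₀, le_add_of_nonneg_right (by positivity)⟩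
  have hmapsTo := @mapsTo_Icc_of_hasDerivAt_comparisonField a b c δ₁ δ₂ ha hb.le hc hδ₁.le hδ₂.le
  refine ⟨fun T _ v hv₀' hv => ?_, fun v hv₀' hv => ?_⟩
  · obtain ⟨w, hw₀, hw⟩ :=
      exists_forall_ge_hasDerivAt_comparisonField ha hb.le hc hδ₁.le hδ₂.le ht₀ hB hv₀B
    refine ⟨w, hw₀, hw, fun t ht => ?_⟩
    have hvt (s : ℝ) (hs : s ∈ Icc t₀ t) :
        HasDerivAt v (comparisonField a b c δ₁ δ₂ s (v s)) s := hv s ⟨hs.1, hs.2.trans_lt ht.2⟩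
    have hwt (s : ℝ) (hs : s ∈ Icc t₀ t) :
        HasDerivAt w (comparisonField a b c δ₁ δ₂ s (w s)) s := hw s hs.1
    have hvB := hmapsTo ht₀ hB hvt (hv₀' ▸ hv₀B)
    have hwB := hmapsTo ht₀ hB hwt (hw₀ ▸ hv₀B)
    exact ODE_solution_unique_of_mem_Icc_right (s := fun _ => Icc 0 B)
      (fun s hs => lipschitzOnWith_comparisonField ha.le hb.le hδ₁.le (ht₀.trans hs.1) B)
      (HasDerivAt.continuousOn hwt)
      (fun s hs => (hwt s (Ico_subset_Icc_self hs)).hasDerivWithinAt)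
      (fun s hs => hwB (Ico_subset_Icc_self hs)) (HasDerivAt.continuousOn hvt)
      (fun s hs => (hvt s (Ico_subset_Icc_self hs)).hasDerivWithinAt)
      (fun s hs => hvB (Ico_subset_Icc_self hs)) (hw₀.trans hv₀'.symm) ⟨ht.1, le_rfl⟩
  · have hvB (t : ℝ) (ht : t ∈ Ici t₀) : v t ∈ Icc 0 B :=
      hmapsTo ht₀ hB (fun s hs => hv s hs.1) (hv₀' ▸ hv₀B) ⟨ht, le_rfl⟩
    exact ⟨⟨B, fun t ht => (abs_of_nonneg (hvB t ht).1).trans_le (hvB t ht).2⟩,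
      tendsto_zero_of_hasDerivAt_comparisonField ha hδ₁ hδ₂ hv fun t ht => (hvB t ht).1⟩
end

section
/- Let a, b, c > 0 and δ₁, δ₂ > 0 be constants. Every solution v of v̇(t) = -a·v(t)² + b·v(t)·e^{-δ₁ t} + c·e^{-δ₂ t} on an interval contained in [t₀, ∞) with v(t₀) = v₀ ≥ 0 and t₀ ≥ 0 satisfies the explicit bound v(t) ≤ max(v₀, 1, (b·e^{-δ₁ t₀} + c·e^{-δ₂ t₀})/a) for all t ≥ t₀ in its domain. In particular, whenever v(t) > max(1, (b·e^{-δ₁ t} + c·e^{-δ₂ t})/a), one has v̇(t) < 0. -/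
open Set Filter Real

/-- **Explicit uniform bound** for solutions of the comparison equation
`v̇ = -a v² + b v e^{-δ₁ t} + c e^{-δ₂ t}` with `a, b, c, δ₁, δ₂ > 0`.
If `v` solves the equation on an interval `s ⊆ [t₀, ∞)` containing `t₀`,
with `v(t₀) = v₀ ≥ 0` and `t₀ ≥ 0`, then
`v(t) ≤ max (v₀, 1, (b e^{-δ₁ t₀} + c e^{-δ₂ t₀})/a)` on `s`; moreover whenever
`v(t) > max (1, (b e^{-δ₁ t} + c e^{-δ₂ t})/a)` one has `v̇(t) < 0`. -/
theorem comparison_lemma_explicit_bound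
    (a b c δ₁ δ₂ t₀ v₀ : ℝ)
    (ha : 0 < a) (hb : 0 < b) (hc : 0 < c) (hδ₁ : 0 < δ₁) (hδ₂ : 0 < δ₂)
    (ht₀ : 0 ≤ t₀) (hv₀ : 0 ≤ v₀)
    (s : Set ℝ) (hconn : s.OrdConnected) (hs : s ⊆ Set.Ici t₀) (ht₀s : t₀ ∈ s)
    (v : ℝ → ℝ) (hinit : v t₀ = v₀)
    (hsol : ∀ t ∈ s,
      HasDerivAt v (-a * (v t) ^ 2 + b * (v t) * Real.exp (-δ₁ * t)
        + c * Real.exp (-δ₂ * t)) t) :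
    (∀ t ∈ s, v t ≤
      max v₀ (max 1 ((b * Real.exp (-δ₁ * t₀) + c * Real.exp (-δ₂ * t₀)) / a))) ∧
    (∀ t ∈ s,
      max 1 ((b * Real.exp (-δ₁ * t) + c * Real.exp (-δ₂ * t)) / a) < v t →
      deriv v t < 0) := by
  set M : ℝ := max v₀ (max 1 ((b * Real.exp (-δ₁ * t₀) + c * Real.exp (-δ₂ * t₀)) / a))
    with hM
  have hkey : ∀ u ∈ s,
      max 1 ((b * Real.exp (-δ₁ * u) + c * Real.exp (-δ₂ * u)) / a) < v u →
      deriv v u < 0 := by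
    intro u hu hgt
    rw [(hsol u hu).deriv]
    obtain ⟨h1, h2⟩ := max_lt_iff.mp hgt
    rw [div_lt_iff₀ ha] at h2
    have hE₁ := Real.exp_pos (-δ₁ * u)
    have hE₂ := Real.exp_pos (-δ₂ * u)
    have hv : (0:ℝ) < v u := lt_trans one_pos h1
    nlinarith [mul_lt_mul_of_pos_right h2 hv, mul_lt_mul_of_pos_left h1 (mul_pos hc hE₂)]
  refine ⟨?_, hkey⟩
  intro t ht
  by_contra hlt
  push_neg at hlt
  have htt₀ : t₀ ≤ t := hs ht
  have hIcc : Set.Icc t₀ t ⊆ s := hconn.out ht₀s ht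
  have hcont : ContinuousOn v (Set.Icc t₀ t) := fun u hu =>
    ((hsol u (hIcc hu)).continuousAt).continuousWithinAt
  set S : Set ℝ := Set.Icc t₀ t ∩ v ⁻¹' (Set.Iic M) with hS
  have ht₀S : t₀ ∈ S := ⟨⟨le_refl _, htt₀⟩, by
    simp only [Set.mem_preimage, Set.mem_Iic, hinit]; exact le_max_left _ _⟩
  have hSbdd : BddAbove S := ⟨t, fun u hu => hu.1.2⟩
  have hSclosed : IsClosed S :=
    hcont.preimage_isClosed_of_isClosed isClosed_Icc isClosed_Iic
  set σ : ℝ := sSup S with hσdef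
  have hσ : σ ∈ S := hSclosed.csSup_mem ⟨t₀, ht₀S⟩ hSbdd
  have hσle : v σ ≤ M := hσ.2
  have hσt : σ < t := lt_of_le_of_ne hσ.1.2 (fun h => absurd (h ▸ hσle) (not_le.mpr hlt))
  have hout : ∀ u ∈ Set.Ioc σ t, M < v u := by
    intro u hu
    by_contra hle
    push_neg at hle
    have huS : u ∈ S := ⟨⟨le_trans hσ.1.1 hu.1.le, hu.2⟩, hle⟩
    exact absurd (le_csSup hSbdd huS) (not_le.mpr hu.1)
  have hbound : ∀ u, t₀ ≤ u →
      max 1 ((b * Real.exp (-δ₁ * u) + c * Real.exp (-δ₂ * u)) / a) ≤ M := by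
    intro u hu
    apply max_le
    · exact le_trans (le_max_left _ _) (le_max_right _ _)
    · refine le_trans ?_ (le_trans (le_max_right _ _) (le_max_right _ _))
      have e1 : Real.exp (-δ₁ * u) ≤ Real.exp (-δ₁ * t₀) :=
        Real.exp_le_exp.mpr (by nlinarith)
      have e2 : Real.exp (-δ₂ * u) ≤ Real.exp (-δ₂ * t₀) :=
        Real.exp_le_exp.mpr (by nlinarith)
      gcongr
  have hanti : StrictAntiOn v (Set.Icc σ t) := by
    apply strictAntiOn_of_deriv_neg (convex_Icc σ t)
      (hcont.mono (Set.Icc_subset_Icc_left hσ.1.1))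
    intro u hu
    rw [interior_Icc] at hu
    have hus : u ∈ s := hIcc ⟨le_trans hσ.1.1 hu.1.le, hu.2.le⟩
    exact hkey u hus (lt_of_le_of_lt (hbound u (le_trans hσ.1.1 hu.1.le))
      (hout u ⟨hu.1, hu.2.le⟩))
  have : v t < v σ := hanti ⟨le_refl _, hσt.le⟩ ⟨hσt.le, le_refl _⟩ hσt
  linarith
end

section
/- Let f : ℝⁿ → ℝⁿ be continuous and suppose every zero of f is an isolated point of the zero set {y : f(y) = 0}. Let h : [0,∞) × ℝⁿ → ℝⁿ be continuous and satisfy: (i) h(0, x) ≠ x for every x ∈ ℝⁿ, and (ii) for every x ∈ ℝⁿ, lim_{t→∞} h(t, x) = x. Then there is no point x* ∈ ℝⁿ such that f(h(t, x*)) = 0 for all t ≥ 0; i.e., the masked system ẋ = f(h(t, x)) has no equilibrium point. -/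
open Set Filter Topology

/-!
The zero set of `f` is discrete, so the continuous curve `t ↦ h t x*`, which stays in it on the
connected half-line `[0, ∞)`, is constant there. A constant curve converging to `x*` equals `x*`,
so `h 0 x* = x*`, contradicting the fact that the mask alters every state at time `0`.
-/

theorem IsDiscrete.of_forall_exists_mem_nhds {X : Type*} [TopologicalSpace X] {s : Set X}
    (hs : ∀ y ∈ s, ∃ U ∈ 𝓝 y, ∀ z ∈ U, z ∈ s → z = y) : IsDiscrete s := by
  refine IsDiscrete.of_nhdsWithin fun y hy A hA => ?_
  obtain ⟨U, hU, hUs⟩ := hs y hy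
  filter_upwards [nhdsWithin_le_nhds hU, self_mem_nhdsWithin] with z hzU hzs
  rw [hUs z hzU hzs]
  exact mem_pure.mp hA

theorem eqOn_Ici_of_tendsto_atTop_of_mapsTo_isDiscrete {α X : Type*}
    [ConditionallyCompleteLinearOrder α] [DenselyOrdered α] [TopologicalSpace α] [OrderTopology α]
    [TopologicalSpace X] [T2Space X] {T : Set X} (hT : IsDiscrete T) {g : α → X} {a : α} {x : X}
    (hg : ContinuousOn g (Ici a)) (hgT : MapsTo g (Ici a) T) (hlim : Tendsto g atTop (𝓝 x)) :
    EqOn g (fun _ => x) (Ici a) := by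
  have hconst : ∀ t ∈ Ici a, g t = g a := fun t ht =>
    isPreconnected_Ici.constant_of_mapsTo hT hg hgT ht self_mem_Ici
  have hga : g a = x := by
    refine tendsto_nhds_unique (tendsto_const_nhds.congr' ?_) hlim
    filter_upwards [eventually_ge_atTop a] with t ht using (hconst t ht).symm
  exact fun t ht => (hconst t ht).trans hga

theorem masked_system_has_no_equilibrium_general
    (n : ℕ) (f : (Fin n → ℝ) → (Fin n → ℝ)) (h : ℝ → (Fin n → ℝ) → (Fin n → ℝ))
    (hf_isolated : ∀ y : Fin n → ℝ, f y = 0 →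
      ∃ U ∈ nhds y, ∀ z ∈ U, f z = 0 → z = y)
    (hh_cont : ContinuousOn (fun p : ℝ × (Fin n → ℝ) => h p.1 p.2)
      (Set.Ici (0 : ℝ) ×ˢ Set.univ))
    (hh_zero : ∀ x : Fin n → ℝ, h 0 x ≠ x)
    (hh_vanish : ∀ x : Fin n → ℝ,
      Filter.Tendsto (fun t => h t x) Filter.atTop (nhds x)) :
    ¬ ∃ xstar : Fin n → ℝ, ∀ t : ℝ, 0 ≤ t → f (h t xstar) = 0 := by
  rintro ⟨x, hx⟩
  have hzeros : IsDiscrete {y | f y = 0} := .of_forall_exists_mem_nhds hf_isolated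
  have hcurve : ContinuousOn (fun t => h t x) (Ici 0) :=
    hh_cont.comp (Continuous.prodMk_left x).continuousOn fun t ht => ⟨ht, mem_univ x⟩
  exact hh_zero x <|
    eqOn_Ici_of_tendsto_atTop_of_mapsTo_isDiscrete hzeros hcurve hx (hh_vanish x) self_mem_Ici

/-- **Proposition 1 (no equilibria of the masked system).**
Let `f : ℝⁿ → ℝⁿ` be continuous with every zero of `f` an isolated point of the
zero set `{y | f y = 0}`. Let `h : [0,∞) × ℝⁿ → ℝⁿ` be continuous with
`h 0 x ≠ x` for every `x` (property P2, the mask alters every state at time 0) and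
`h t x → x` as `t → ∞` for every `x` (property P6, the mask is vanishing).
Then there is no point `x*` with `f (h t x*) = 0` for all `t ≥ 0`; i.e. the masked
system `ẋ = f (h t x)` has no equilibrium point. -/
theorem masked_system_has_no_equilibrium
    (n : ℕ) (f : (Fin n → ℝ) → (Fin n → ℝ)) (h : ℝ → (Fin n → ℝ) → (Fin n → ℝ))
    (hf_cont : Continuous f)
    (hf_isolated : ∀ y : Fin n → ℝ, f y = 0 →
      ∃ U ∈ nhds y, ∀ z ∈ U, f z = 0 → z = y)
    (hh_cont : ContinuousOn (fun p : ℝ × (Fin n → ℝ) => h p.1 p.2)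
      (Set.Ici (0 : ℝ) ×ˢ Set.univ))
    (hh_zero : ∀ x : Fin n → ℝ, h 0 x ≠ x)
    (hh_vanish : ∀ x : Fin n → ℝ,
      Filter.Tendsto (fun t => h t x) Filter.atTop (nhds x)) :
    ¬ ∃ xstar : Fin n → ℝ, ∀ t : ℝ, 0 ≤ t → f (h t xstar) = 0 :=
  masked_system_has_no_equilibrium_general n f h hf_isolated hh_cont hh_zero hh_vanish
end

section
/- Let h : [0,∞) × ℝⁿ → ℝⁿ be continuous with, for each i ∈ {1,…,n} and each x ∈ ℝⁿ, the function t ↦ |hᵢ(t, x) − xᵢ| nonincreasing in t and tending to 0 as t → ∞. Let f : ℝⁿ → ℝⁿ be Lipschitz continuous. Then for every compact set K ⊆ ℝⁿ, sup_{x ∈ K} ‖f(h(t, x)) − f(x)‖ → 0 as t → ∞. Consequently, the time-varying masked system ẋ = f(h(t, x)) is asymptotically autonomous with the original system ẋ = f(x) as limit system. -/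
open Set Filter Topology

/-!
The displacement `dist (h t x) x` is the sup of the componentwise displacements, hence
nonincreasing in `t`, continuous in `x` and pointwise convergent to `0`; by Dini's theorem it
tends to `0` uniformly on compact sets. Uniform continuity of the Lipschitz map `f` transfers
this uniform convergence `h t → id` to `f ∘ h t → f`.
-/

theorem tendstoUniformlyOn_of_antitoneOn_Ici {α : Type*} [TopologicalSpace α]
    {F : ℝ → α → ℝ} {f : α → ℝ} {s : Set α} {a : ℝ} (hs : IsCompact s)
    (hF_cont : ∀ t, a ≤ t → ContinuousOn (F t) s)
    (hF_anti : ∀ x ∈ s, AntitoneOn (F · x) (Ici a))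
    (hf : ContinuousOn f s) (h_tendsto : ∀ x ∈ s, Tendsto (F · x) atTop (𝓝 (f x))) :
    TendstoUniformlyOn F f atTop s := by
  -- Dini's theorem applied to `F (max a t)`, which is antitone on all of `ℝ`.
  have h_eventually : ∀ᶠ t in atTop, F (max a t) = F t := by
    filter_upwards [eventually_ge_atTop a] with t ht using by rw [max_eq_right ht]
  refine (Antitone.tendstoUniformlyOn_of_forall_tendsto hs (fun t => hF_cont _ (le_max_left a t))
    (fun x hx t u htu => hF_anti x hx (le_max_left a t) (le_max_left a u) (max_le_max_left a htu))
    hf fun x hx => (h_tendsto x hx).congr' ?_).congr ?_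
  · filter_upwards [h_eventually] with t ht using by rw [ht]
  · filter_upwards [h_eventually] with t ht using by rw [ht]; exact eqOn_refl _ _

theorem tendstoUniformlyOn_id_of_antitoneOn_dist {X : Type*} [PseudoMetricSpace X]
    {h : ℝ → X → X} {K : Set X} {a : ℝ} (hK : IsCompact K)
    (h_cont : ∀ t, a ≤ t → ContinuousOn (h t) K)
    (h_anti : ∀ x ∈ K, AntitoneOn (fun t => dist (h t x) x) (Ici a))
    (h_tendsto : ∀ x ∈ K, Tendsto (h · x) atTop (𝓝 x)) :
    TendstoUniformlyOn h id atTop K := by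
  have h_dist : TendstoUniformlyOn (fun t x => dist (h t x) x) 0 atTop K :=
    tendstoUniformlyOn_of_antitoneOn_Ici hK
      (fun t ht => continuous_dist.comp_continuousOn ((h_cont t ht).prodMk continuousOn_id))
      h_anti continuousOn_const
      fun x hx => tendsto_iff_dist_tendsto_zero.1 (h_tendsto x hx)
  rw [Metric.tendstoUniformlyOn_iff] at h_dist ⊢
  intro ε hε
  filter_upwards [h_dist ε hε] with t ht x hx
  simpa [dist_comm x, abs_of_nonneg dist_nonneg] using ht x hx

theorem antitoneOn_dist_pi {ι : Type*} [Fintype ι] {E : ι → Type*}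
    [∀ i, PseudoMetricSpace (E i)] {u v : ℝ → ∀ i, E i} {s : Set ℝ}
    (h : ∀ i, AntitoneOn (fun t => dist (u t i) (v t i)) s) :
    AntitoneOn (fun t => dist (u t) (v t)) s := fun _ ht _ hr htr =>
  (dist_pi_le_iff dist_nonneg).2 fun i => (h i ht hr htr).trans (dist_le_pi_dist _ _ i)

/-- **Proposition 2 (the masked system is asymptotically autonomous).**
If `h : [0,∞) × ℝⁿ → ℝⁿ` is a continuous vanishing mask (for each component `i`
and each `x`, `t ↦ |hᵢ(t,x) − xᵢ|` is nonincreasing on `[0,∞)` and `hᵢ(t,x) → xᵢ`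
as `t → ∞`) and `f : ℝⁿ → ℝⁿ` is Lipschitz continuous, then
`sup_{x ∈ K} ‖f(h(t,x)) − f(x)‖ → 0` as `t → ∞` for every compact `K ⊆ ℝⁿ`;
i.e. the masked system `ẋ = f(h(t,x))` is asymptotically autonomous with the
original system `ẋ = f(x)` as limit system. -/
theorem masked_system_asymptotically_autonomous
    (n : ℕ) (h : ℝ → (Fin n → ℝ) → (Fin n → ℝ)) (f : (Fin n → ℝ) → (Fin n → ℝ))
    (hh_cont : ContinuousOn (fun p : ℝ × (Fin n → ℝ) => h p.1 p.2)
      (Set.Ici (0 : ℝ) ×ˢ Set.univ))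
    (hh_mono : ∀ (i : Fin n) (x : Fin n → ℝ),
      AntitoneOn (fun t => |h t x i - x i|) (Set.Ici (0 : ℝ)))
    (hh_vanish : ∀ (i : Fin n) (x : Fin n → ℝ),
      Filter.Tendsto (fun t => h t x i) Filter.atTop (nhds (x i)))
    (hf_lip : ∃ C : NNReal, LipschitzWith C f) :
    ∀ K : Set (Fin n → ℝ), IsCompact K →
      TendstoUniformlyOn (fun t x => f (h t x)) f Filter.atTop K := by
  intro K hK
  obtain ⟨C, hC⟩ := hf_lip
  have h_cont : ∀ t, 0 ≤ t → ContinuousOn (h t) K := fun t ht =>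
    hh_cont.comp (Continuous.prodMk_right t).continuousOn fun _ _ => ⟨ht, trivial⟩
  have h_anti : ∀ x ∈ K, AntitoneOn (fun t => dist (h t x) x) (Ici 0) := fun x _ =>
    antitoneOn_dist_pi fun i => by simpa only [Real.dist_eq] using hh_mono i x
  exact hC.uniformContinuous.comp_tendstoUniformlyOn <|
    tendstoUniformlyOn_id_of_antitoneOn_dist hK h_cont h_anti
      fun x _ => tendsto_pi_nhds.2 (hh_vanish · x)
end

section
/- Every solution x : [t₀, ∞) → ℝⁿ of the masked average-consensus system with x(t₀) = x₀ converges to the average-consensus point of the unmasked problem: lim_{t→∞} x(t) = η𝟙, where η = 𝟙ᵀx₀/n. In other words, the point η𝟙 is a global attractor for the masked system on the affine subspace {x : 𝟙ᵀx = 𝟙ᵀx₀}, even though the masked system has no equilibrium points in general. -/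
open Set Filter Topology Matrix

/-- Right-hand side of the masked average-consensus system
`ẋ = -L (I + Φ e^{-Σ t}) (x + e^{-Δ t} γ)`, written componentwise through the
diagonal matrices `Φ = diag φ`, `Σ = diag σ`, `Δ = diag δ`. -/
noncomputable def maskedConsensusRHS {n : ℕ} (L : Matrix (Fin n) (Fin n) ℝ)
    (φ σ δ γ : Fin n → ℝ) (t : ℝ) (x : Fin n → ℝ) : Fin n → ℝ :=
  -(L.mulVec (fun i => (1 + φ i * Real.exp (-σ i * t)) * (x i + Real.exp (-δ i * t) * γ i)))

/-
Put `y = x - η𝟙`. Since `𝟙ᵀL = 0` the sum of the coordinates is conserved, so `y` stays in `𝟙^⊥`,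
where compactness of the unit sphere makes the form of `L + Lᵀ` coercive: `λ yᵀy ≤ yᵀ(L + Lᵀ)y`.
The masks only perturb the unmasked dynamics `ẋ = -Lx` by `-L r` with `‖r‖ ≤ e(t)(‖x‖ + 1)` and
`e(t) → 0`, because `Φe^{-Σt}` and `e^{-Δt}` decay. Hence `V = yᵀy` satisfies
`V' ≤ -λV + g(t)(V + 1)` with `g → 0`, and Grönwall's inequality on the tail where `g` is small
forces `V → 0`.
-/

open scoped BigOperators

section DotProduct

variable {ι : Type*} [Fintype ι]

theorem HasDerivAt.dotProduct {f g : ℝ → ι → ℝ} {f' g' : ι → ℝ} {t : ℝ}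
    (hf : HasDerivAt f f' t) (hg : HasDerivAt g g' t) :
    HasDerivAt (fun s => f s ⬝ᵥ g s) (f' ⬝ᵥ g t + f t ⬝ᵥ g') t := by
  show HasDerivAt (fun s => ∑ i, f s i * g s i) (∑ i, f' i * g t i + ∑ i, f t i * g' i) t
  rw [← Finset.sum_add_distrib]
  exact HasDerivAt.fun_sum fun i _ => (hasDerivAt_pi.1 hf i).mul (hasDerivAt_pi.1 hg i)

theorem norm_sq_le_dotProduct_self (v : ι → ℝ) : ‖v‖ ^ 2 ≤ v ⬝ᵥ v := by
  have hv : ‖v‖ ≤ √(v ⬝ᵥ v) := by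
    refine (pi_norm_le_iff_of_nonneg (Real.sqrt_nonneg _)).2 fun i => ?_
    rw [Real.norm_eq_abs, ← Real.sqrt_sq_eq_abs]
    exact Real.sqrt_le_sqrt <| (sq (v i)).trans_le <|
      Finset.single_le_sum (fun j _ => mul_self_nonneg (v j)) (Finset.mem_univ i)
  calc ‖v‖ ^ 2 ≤ √(v ⬝ᵥ v) ^ 2 := by gcongr
    _ = v ⬝ᵥ v := Real.sq_sqrt (Finset.sum_nonneg fun j _ => mul_self_nonneg (v j))

theorem abs_dotProduct_mulVec_le (A : Matrix ι ι ℝ) (v w : ι → ℝ) :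
    |v ⬝ᵥ A *ᵥ w| ≤ (∑ i, ∑ j, |A i j|) * (‖v‖ * ‖w‖) := by
  calc |v ⬝ᵥ A *ᵥ w| = |∑ i, ∑ j, A i j * (v i * w j)| := by
        simp only [dotProduct, mulVec, Finset.mul_sum]
        congr 1
        exact Finset.sum_congr rfl fun i _ => Finset.sum_congr rfl fun j _ => by ring
    _ ≤ ∑ i, ∑ j, |A i j * (v i * w j)| :=
        (Finset.abs_sum_le_sum_abs _ _).trans
          (Finset.sum_le_sum fun i _ => Finset.abs_sum_le_sum_abs _ _)
    _ ≤ ∑ i, ∑ j, |A i j| * (‖v‖ * ‖w‖) := by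
        gcongr with i _ j _
        rw [abs_mul, abs_mul]
        gcongr
        exacts [norm_le_pi_norm v i, norm_le_pi_norm w j]
    _ = (∑ i, ∑ j, |A i j|) * (‖v‖ * ‖w‖) := by simp only [Finset.sum_mul]

theorem dotProduct_transpose_mulVec_self (A : Matrix ι ι ℝ) (v : ι → ℝ) :
    v ⬝ᵥ Aᵀ *ᵥ v = v ⬝ᵥ A *ᵥ v := by
  rw [dotProduct_mulVec, vecMul_transpose, dotProduct_comm]

theorem sum_mulVec_eq_zero {A : Matrix ι ι ℝ} (hA : Aᵀ *ᵥ (fun _ => 1) = 0) (v : ι → ℝ) :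
    ∑ i, (A *ᵥ v) i = 0 := by
  have h := congrArg (· ⬝ᵥ v) hA
  simp only [mulVec_transpose, ← dotProduct_mulVec, zero_dotProduct] at h
  simpa [dotProduct] using h

theorem mulVec_add_const {A : Matrix ι ι ℝ} (hA : A *ᵥ (fun _ => 1) = 0) (v : ι → ℝ) (a : ℝ) :
    A *ᵥ (v + fun _ => a) = A *ᵥ v := by
  have : (fun _ : ι => a) = a • fun _ => 1 := by ext; simp
  rw [mulVec_add, this, mulVec_smul, hA, smul_zero, add_zero]

theorem exists_pos_mul_dotProduct_self_le_of_isClosed_cone (M : Matrix ι ι ℝ)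
    {S : Set (ι → ℝ)} (hS : IsClosed S) (hsmul : ∀ c : ℝ, ∀ w ∈ S, c • w ∈ S)
    (hM : ∀ w ∈ S, w ≠ 0 → 0 < w ⬝ᵥ M *ᵥ w) :
    ∃ lam > 0, ∀ w ∈ S, lam * (w ⬝ᵥ w) ≤ w ⬝ᵥ M *ᵥ w := by
  have hQ : Continuous fun w : ι → ℝ => w ⬝ᵥ M *ᵥ w :=
    continuous_id.dotProduct (continuous_const.matrix_mulVec continuous_id)
  set K := S ∩ {w | w ⬝ᵥ w = 1}
  have hK : IsCompact K := by
    refine Metric.isCompact_of_isClosed_isBounded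
      (hS.inter (isClosed_eq (continuous_id.dotProduct continuous_id) continuous_const))
      (Metric.isBounded_closedBall (x := 0) (r := 1) |>.subset fun w hw => ?_)
    rw [Metric.mem_closedBall, dist_zero_right]
    have h1 : w ⬝ᵥ w = 1 := hw.2
    nlinarith [norm_sq_le_dotProduct_self w, norm_nonneg w]
  obtain ⟨lam, hlam, hle⟩ := hK.exists_forall_le' hQ.continuousOn
    (a := 0) fun w hw => hM w hw.1 (by rintro rfl; simpa using hw.2)
  refine ⟨lam, hlam, fun w hw => ?_⟩
  rcases eq_or_ne w 0 with rfl | hw0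
  · simp
  have hpos : 0 < w ⬝ᵥ w := (Finset.sum_nonneg fun j _ => mul_self_nonneg (w j)).lt_of_ne
    (Ne.symm (dotProduct_self_eq_zero.not.2 hw0))
  set s := √(w ⬝ᵥ w)
  have hs : 0 < s := Real.sqrt_pos.2 hpos
  have hs2 : s ^ 2 = w ⬝ᵥ w := Real.sq_sqrt hpos.le
  have h := hle (s⁻¹ • w) ⟨hsmul _ _ hw, by
    simp only [mem_ofPred_eq, smul_dotProduct, dotProduct_smul, smul_eq_mul, ← hs2]
    field_simp⟩
  simp only [mulVec_smul, smul_dotProduct, dotProduct_smul, smul_eq_mul] at h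
  calc lam * (w ⬝ᵥ w) ≤ s⁻¹ * (s⁻¹ * (w ⬝ᵥ M *ᵥ w)) * s ^ 2 := by rw [← hs2]; gcongr
    _ = w ⬝ᵥ M *ᵥ w := by field_simp

end DotProduct

theorem le_exp_mul_add_div_of_hasDerivAt_le {V V' : ℝ → ℝ} {T k ε : ℝ} (hk : 0 < k)
    (hε : 0 ≤ ε) (hV : ∀ t ∈ Ici T, HasDerivAt V (V' t) t)
    (hle : ∀ t ∈ Ici T, V' t ≤ -k * V t + ε) :
    ∀ t ∈ Ici T, V t ≤ V T * Real.exp (-k * (t - T)) + ε / k := by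
  intro t ht
  have h := le_gronwallBound_of_liminf_deriv_right_le (f := V) (f' := V') (b := t)
    (fun s hs => (hV s hs.1).continuousAt.continuousWithinAt)
    (fun s hs r hr => (hV s hs.1).hasDerivWithinAt.liminf_right_slope_le hr)
    le_rfl (fun s hs => hle s hs.1) t ⟨ht, le_rfl⟩
  rw [gronwallBound_of_K_ne_0 (neg_ne_zero.2 hk.ne')] at h
  have hrest : ε / -k * (Real.exp (-k * (t - T)) - 1) ≤ ε / k := by
    have : 0 ≤ ε / k * Real.exp (-k * (t - T)) := by positivity
    rw [div_neg]
    linarith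
  linarith

theorem tendsto_zero_of_hasDerivAt_le_neg_mul_add {V V' g : ℝ → ℝ} {lam : ℝ} (hlam : 0 < lam)
    (hV : ∀ᶠ t in atTop, HasDerivAt V (V' t) t) (hV0 : ∀ᶠ t in atTop, 0 ≤ V t)
    (hle : ∀ᶠ t in atTop, V' t ≤ -lam * V t + g t * (V t + 1))
    (hg : Tendsto g atTop (𝓝 0)) :
    Tendsto V atTop (𝓝 0) := by
  refine tendsto_order.2 ⟨fun a ha => hV0.mono fun t ht => ha.trans_le ht, fun ε hε => ?_⟩
  -- once `g ≤ δ`, `V` decays at rate `lam / 2` up to an offset `2 δ / lam ≤ ε / 4`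
  set δ := min (lam / 2) (lam * ε / 8)
  have hδ : 0 < δ := by positivity
  obtain ⟨T, hT⟩ := eventually_atTop.1
    (hV.and (hV0.and (hle.and (hg.eventually (gt_mem_nhds hδ)))))
  have hdecay := le_exp_mul_add_div_of_hasDerivAt_le (half_pos hlam) hδ.le
    (fun t ht => (hT t ht).1) fun t ht => by
      obtain ⟨-, hVt, hVt', hgt⟩ := hT t ht
      have : δ ≤ lam / 2 := min_le_left _ _
      nlinarith
  have hoffset : δ / (lam / 2) ≤ ε / 4 := by
    rw [div_le_iff₀ (half_pos hlam)]
    linarith [min_le_right (lam / 2) (lam * ε / 8)]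
  have hexp : Tendsto (fun t => V T * Real.exp (-(lam / 2) * (t - T))) atTop (𝓝 0) := by
    have := ((tendsto_id.atTop_add (tendsto_const_nhds (x := -T))).const_mul_atTop_of_neg
      (neg_lt_zero.2 (half_pos hlam)))
    simpa [sub_eq_add_neg] using (Real.tendsto_exp_atBot.comp this).const_mul (V T)
  filter_upwards [eventually_ge_atTop T, hexp.eventually (gt_mem_nhds (half_pos hε))]
    with t ht hsmall
  linarith [hdecay t ht]

section Consensus

variable {ι : Type*} [Fintype ι]

theorem tendsto_of_dotProduct_self_sub_tendsto_zero {α : Type*} {l : Filter α}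
    {f : α → ι → ℝ} {c : ι → ℝ} (h : Tendsto (fun a => (f a - c) ⬝ᵥ (f a - c)) l (𝓝 0)) :
    Tendsto f l (𝓝 c) := by
  rw [tendsto_iff_norm_sub_tendsto_zero]
  have hsq : Tendsto (fun a => ‖f a - c‖ ^ 2) l (𝓝 0) :=
    squeeze_zero (fun _ => by positivity) (fun a => norm_sq_le_dotProduct_self _) h
  simpa [Real.sqrt_sq (norm_nonneg _)] using hsq.sqrt

theorem sum_eq_of_hasDerivAt_of_sum_eq_zero {x v : ℝ → ι → ℝ} {t₀ : ℝ}
    (hx : ∀ t ∈ Ici t₀, HasDerivAt x (v t) t) (hv : ∀ t ∈ Ici t₀, ∑ i, v t i = 0) :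
    ∀ t ∈ Ici t₀, ∑ i, x t i = ∑ i, x t₀ i := by
  have hsum : ∀ t ∈ Ici t₀, HasDerivAt (fun s => ∑ i, x s i) 0 t := fun t ht => by
    simpa [hv t ht] using
      HasDerivAt.fun_sum (u := Finset.univ) fun i _ => hasDerivAt_pi.1 (hx t ht) i
  intro t ht
  exact constant_of_has_deriv_right_zero
    (fun s hs => (hsum s hs.1).continuousAt.continuousWithinAt)
    (fun s hs => (hsum s hs.1).hasDerivWithinAt) t ⟨ht, le_rfl⟩

theorem two_mul_dotProduct_neg_mulVec_add_le {L : Matrix ι ι ℝ} (hL1 : L *ᵥ (fun _ => 1) = 0)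
    {lam e a : ℝ} {v r : ι → ℝ}
    (hgap : lam * ((v - fun _ => a) ⬝ᵥ (v - fun _ => a))
      ≤ (v - fun _ => a) ⬝ᵥ (L + Lᵀ) *ᵥ (v - fun _ => a))
    (hr : ‖r‖ ≤ e * (‖v‖ + 1)) :
    2 * ((v - fun _ => a) ⬝ᵥ -(L *ᵥ (v + r))) ≤ -lam * ((v - fun _ => a) ⬝ᵥ (v - fun _ => a))
      + 2 * (∑ i, ∑ j, |L i j|) * (2 + |a|) * e * ((v - fun _ => a) ⬝ᵥ (v - fun _ => a) + 1) := by
  set y := v - fun _ => a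
  set C := ∑ i, ∑ j, |L i j|
  have hLv : L *ᵥ (v + r) = L *ᵥ (y + r) := by
    rw [← mulVec_add_const hL1 (y + r) a]
    congr 1
    simp only [y]
    abel
  have hsplit : 2 * (y ⬝ᵥ -(L *ᵥ (y + r))) ≤ -lam * (y ⬝ᵥ y) + 2 * C * (‖y‖ * ‖r‖) := by
    rw [add_mulVec, dotProduct_add, dotProduct_transpose_mulVec_self] at hgap
    have hcross := (abs_le.1 (abs_dotProduct_mulVec_le L y r)).1
    rw [mulVec_add, neg_add, dotProduct_add, dotProduct_neg, dotProduct_neg]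
    linarith
  have he : 0 ≤ e := nonneg_of_mul_nonneg_left ((norm_nonneg r).trans hr) (by positivity)
  have hv : ‖v‖ ≤ ‖y‖ + |a| := by
    calc ‖v‖ = ‖y + fun _ => a‖ := by simp only [y, sub_add_cancel]
      _ ≤ ‖y‖ + |a| := (norm_add_le _ _).trans (by gcongr; exact pi_norm_const_le a)
  have hy : ‖y‖ * (‖y‖ + (|a| + 1)) ≤ (2 + |a|) * (y ⬝ᵥ y + 1) := by
    nlinarith [norm_sq_le_dotProduct_self y, sq_nonneg (‖y‖ - 1), norm_nonneg y, abs_nonneg a]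
  have hC : 0 ≤ C := by positivity
  calc 2 * (y ⬝ᵥ -(L *ᵥ (v + r))) ≤ -lam * (y ⬝ᵥ y) + 2 * C * (‖y‖ * ‖r‖) := hLv ▸ hsplit
    _ ≤ -lam * (y ⬝ᵥ y) + 2 * C * (‖y‖ * (e * (‖y‖ + (|a| + 1)))) := by
        gcongr
        exact hr.trans (mul_le_mul_of_nonneg_left (by linarith) he)
    _ ≤ _ := by
        have := mul_le_mul_of_nonneg_left hy (mul_nonneg (mul_nonneg zero_le_two hC) he)
        linarith

theorem tendsto_expect_of_hasDerivAt_neg_mulVec_add {L : Matrix ι ι ℝ}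
    (hL1 : L *ᵥ (fun _ => 1) = 0) (hLT1 : Lᵀ *ᵥ (fun _ => 1) = 0)
    (hLpos : ∀ w : ι → ℝ, w ≠ 0 → ∑ i, w i = 0 → 0 < w ⬝ᵥ (L + Lᵀ) *ᵥ w)
    {x r : ℝ → ι → ℝ} {e : ℝ → ℝ} {t₀ : ℝ}
    (hx : ∀ t ∈ Ici t₀, HasDerivAt x (-(L *ᵥ (x t + r t))) t)
    (hr : ∀ t ∈ Ici t₀, ‖r t‖ ≤ e t * (‖x t‖ + 1)) (he : Tendsto e atTop (𝓝 0)) :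
    Tendsto x atTop (𝓝 fun _ => 𝔼 i, x t₀ i) := by
  set a := 𝔼 i, x t₀ i
  have hsum := sum_eq_of_hasDerivAt_of_sum_eq_zero hx fun t _ => by
    simp only [Pi.neg_apply, Finset.sum_neg_distrib, sum_mulVec_eq_zero hLT1, neg_zero]
  obtain ⟨lam, hlam, hgap⟩ := exists_pos_mul_dotProduct_self_le_of_isClosed_cone (L + Lᵀ)
    (S := {w | ∑ i, w i = 0})
    (isClosed_eq (continuous_finsetSum _ fun i _ => continuous_apply i) continuous_const)
    (fun c w hw => by simp [← Finset.mul_sum, hw.out]) fun w hw hw0 => hLpos w hw0 hw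
  have hdev : ∀ t ∈ Ici t₀, ∑ i, (x t i - a) = 0 := fun t ht => by
    rw [Finset.sum_sub_distrib, hsum t ht, Finset.sum_const, Finset.card_univ,
      Fintype.card_smul_expect, sub_self]
  refine tendsto_of_dotProduct_self_sub_tendsto_zero <|
    tendsto_zero_of_hasDerivAt_le_neg_mul_add hlam
      (V' := fun t => 2 * ((x t - fun _ => a) ⬝ᵥ -(L *ᵥ (x t + r t))))
      (g := fun t => 2 * (∑ i, ∑ j, |L i j|) * (2 + |a|) * e t)
      ?_ (Eventually.of_forall fun t => ?_) ?_ ?_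
  · filter_upwards [eventually_ge_atTop t₀] with t ht
    have hy := (hx t ht).sub_const (fun _ => a)
    convert hy.dotProduct hy using 1
    rw [dotProduct_comm, two_mul]
  · exact Finset.sum_nonneg fun i _ => mul_self_nonneg _
  · filter_upwards [eventually_ge_atTop t₀] with t ht
    exact two_mul_dotProduct_neg_mulVec_add_le hL1 (hgap _ (hdev t ht)) (hr t ht)
  · simpa using he.const_mul _

end Consensus

section Mask

variable {ι : Type*}

noncomputable def expDecay (b : ι → ℝ) (t : ℝ) : ι → ℝ := fun i => Real.exp (-b i * t)

theorem tendsto_expDecay {b : ι → ℝ} (hb : ∀ i, 0 < b i) : Tendsto (expDecay b) atTop (𝓝 0) :=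
  tendsto_pi_nhds.2 fun i =>
    Real.tendsto_exp_atBot.comp (tendsto_id.const_mul_atTop_of_neg (neg_lt_zero.2 (hb i)))

noncomputable def maskError (φ σ δ γ : ι → ℝ) (t : ℝ) (x : ι → ℝ) : ι → ℝ :=
  (1 + φ * expDecay σ t) * (x + expDecay δ t * γ) - x

variable [Fintype ι]

noncomputable def maskSize (φ σ δ γ : ι → ℝ) (t : ℝ) : ℝ :=
  ‖φ * expDecay σ t‖ + ‖1 + φ * expDecay σ t‖ * ‖expDecay δ t‖ * ‖γ‖

theorem norm_maskError_le (φ σ δ γ : ι → ℝ) (t : ℝ) (x : ι → ℝ) :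
    ‖maskError φ σ δ γ t x‖ ≤ maskSize φ σ δ γ t * (‖x‖ + 1) := by
  have hsplit : maskError φ σ δ γ t x
      = φ * expDecay σ t * x + (1 + φ * expDecay σ t) * expDecay δ t * γ := by
    rw [maskError]
    ring
  have hA := norm_nonneg (φ * expDecay σ t)
  have hB : 0 ≤ ‖1 + φ * expDecay σ t‖ * ‖expDecay δ t‖ * ‖γ‖ := by positivity
  calc ‖maskError φ σ δ γ t x‖
      ≤ ‖φ * expDecay σ t‖ * ‖x‖ + ‖1 + φ * expDecay σ t‖ * ‖expDecay δ t‖ * ‖γ‖ := by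
        rw [hsplit]
        refine (norm_add_le _ _).trans (add_le_add (norm_mul_le _ _) ?_)
        exact (norm_mul_le _ _).trans (by gcongr; exact norm_mul_le _ _)
    _ ≤ maskSize φ σ δ γ t * (‖x‖ + 1) := by
        rw [maskSize]
        nlinarith [norm_nonneg x]

theorem tendsto_maskSize {φ σ δ : ι → ℝ} (γ : ι → ℝ) (hσ : ∀ i, 0 < σ i) (hδ : ∀ i, 0 < δ i) :
    Tendsto (maskSize φ σ δ γ) atTop (𝓝 0) := by
  have hp : Tendsto (fun t => φ * expDecay σ t) atTop (𝓝 0) := by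
    simpa using (tendsto_expDecay hσ).const_mul φ
  unfold maskSize
  simpa using hp.norm.add
    (((tendsto_const_nhds.add hp).norm.mul (tendsto_expDecay hδ).norm).mul_const ‖γ‖)

end Mask

theorem maskedConsensusRHS_eq {n : ℕ} (L : Matrix (Fin n) (Fin n) ℝ) (φ σ δ γ : Fin n → ℝ)
    (t : ℝ) (x : Fin n → ℝ) :
    maskedConsensusRHS L φ σ δ γ t x = -(L *ᵥ (x + maskError φ σ δ γ t x)) := by
  rw [maskError, add_sub_cancel]
  rfl

theorem masked_consensus_global_attractor_general
    (n : ℕ) (L : Matrix (Fin n) (Fin n) ℝ) (φ σ δ γ : Fin n → ℝ)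
    (hL1 : L.mulVec (fun _ => (1 : ℝ)) = 0)
    (hLT1 : L.transpose.mulVec (fun _ => (1 : ℝ)) = 0)
    (hLpos : ∀ w : Fin n → ℝ, w ≠ 0 → (∑ i, w i) = 0 →
      0 < dotProduct w ((L + L.transpose).mulVec w))
    (hσ : ∀ i, 0 < σ i) (hδ : ∀ i, 0 < δ i)
    (t₀ : ℝ) (x₀ : Fin n → ℝ) (x : ℝ → Fin n → ℝ)
    (hinit : x t₀ = x₀)
    (hsol : ∀ t ∈ Set.Ici t₀, HasDerivAt x (maskedConsensusRHS L φ σ δ γ t (x t)) t) :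
    Filter.Tendsto x Filter.atTop (nhds (fun _ => (∑ i, x₀ i) / n)) := by
  have h := tendsto_expect_of_hasDerivAt_neg_mulVec_add hL1 hLT1 hLpos
    (fun t ht => maskedConsensusRHS_eq L φ σ δ γ t (x t) ▸ hsol t ht)
    (fun t _ => norm_maskError_le φ σ δ γ t (x t)) (tendsto_maskSize γ hσ hδ)
  simpa [Fintype.expect_eq_sum_div_card, hinit] using h

/-- **Global attractivity of the average-consensus point (Theorem 1).**
Every solution `x : [t₀, ∞) → ℝⁿ` of the masked system
`ẋ = -L (I + Φ e^{-Σ t}) (x + e^{-Δ t} γ)` with `x(t₀) = x₀`, where `L` is an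
irreducible weight-balanced Laplacian (`L𝟙 = Lᵀ𝟙 = 0`, `wᵀ(L+Lᵀ)w > 0` for
nonzero `w ⊥ 𝟙`) and `φᵢ, σᵢ, δᵢ > 0`, converges to the average-consensus point
`η 𝟙` with `η = 𝟙ᵀ x₀ / n`. -/
theorem masked_consensus_global_attractor
    (n : ℕ) (hn : 2 ≤ n) (L : Matrix (Fin n) (Fin n) ℝ) (φ σ δ γ : Fin n → ℝ)
    (hL1 : L.mulVec (fun _ => (1 : ℝ)) = 0)
    (hLT1 : L.transpose.mulVec (fun _ => (1 : ℝ)) = 0)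
    (hLpos : ∀ w : Fin n → ℝ, w ≠ 0 → (∑ i, w i) = 0 →
      0 < dotProduct w ((L + L.transpose).mulVec w))
    (hφ : ∀ i, 0 < φ i) (hσ : ∀ i, 0 < σ i) (hδ : ∀ i, 0 < δ i)
    (t₀ : ℝ) (ht₀ : 0 ≤ t₀) (x₀ : Fin n → ℝ) (x : ℝ → Fin n → ℝ)
    (hinit : x t₀ = x₀)
    (hsol : ∀ t ∈ Set.Ici t₀, HasDerivAt x (maskedConsensusRHS L φ σ δ γ t (x t)) t) :
    Filter.Tendsto x Filter.atTop (nhds (fun _ => (∑ i, x₀ i) / n)) :=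
  masked_consensus_global_attractor_general n L φ σ δ γ hL1 hLT1 hLpos hσ hδ t₀ x₀ x hinit hsol
end
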